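/- Let G be a finite set with |G| ≥ 3, let R be an irreflexive symmetric binary relation on G, and let R' be its complementary relation, consisting of all pairs (x,y) with x ≠ y not in R. Then there exists an event-labeled tree (T,t) representing R, R' if and only if the graph G_R is a cograph. -/

import Mathlib

/-- `u` lies on the (unique) path from `v` to the root of the tree `T`. -/
def Anc {V : Type} (T : SimpleGraph V) (root u v : V) : Prop :=
  ∀ p : T.Walk v root, p.IsPath → u ∈ p.support

/-- `w` is the least common ancestor of `x` and `y` in the tree `T` rooted at `root`:
it is a common ancestor and every common ancestor of `x` and `y` is an ancestor of `w`. -/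
def IsLCA {V : Type} (T : SimpleGraph V) (root w x y : V) : Prop :=
  Anc T root w x ∧ Anc T root w y ∧
    ∀ u, Anc T root u x → Anc T root u y → Anc T root u w

/-- `v` is a leaf of the tree `T` rooted at `root`:
a non-root vertex of degree one. -/
def IsLeaf {V : Type} (T : SimpleGraph V) (root v : V) : Prop :=
  v ≠ root ∧ ∃! u, T.Adj v u

/-- The simple graph `G_R` of a (symmetric irreflexive) relation `R`. -/
def relGraph {G : Type} (R : G → G → Prop) : SimpleGraph G where
  Adj x y := x ≠ y ∧ (R x y ∨ R y x)
  symm := ⟨fun _ _ h => ⟨Ne.symm h.1, h.2.symm⟩⟩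
  loopless := ⟨fun _ h => h.1 rfl⟩

/-- A cograph: a simple graph with no induced path on four vertices. -/
def IsCograph {V : Type} (H : SimpleGraph V) : Prop :=
  ¬ ∃ a b c d : V, a ≠ b ∧ a ≠ c ∧ a ≠ d ∧ b ≠ c ∧ b ≠ d ∧ c ≠ d ∧
    H.Adj a b ∧ H.Adj b c ∧ H.Adj c d ∧ ¬ H.Adj a c ∧ ¬ H.Adj a d ∧ ¬ H.Adj b d

/-- The tree `T` rooted at `root` contains the rooted triple `xy|z`:
`x`, `y`, `z` are pairwise distinct leaves and the path from `x` to `y`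
does not intersect the path from `z` to the root. -/
def ContainsTriple {V : Type} (T : SimpleGraph V) (root x y z : V) : Prop :=
  x ≠ y ∧ x ≠ z ∧ y ≠ z ∧
  IsLeaf T root x ∧ IsLeaf T root y ∧ IsLeaf T root z ∧
  ∀ (p : T.Walk x y) (q : T.Walk z root), p.IsPath → q.IsPath →
    ∀ v, v ∈ p.support → v ∉ q.support

/-- The event-labeled tree `(T,t)` (with leaves `ι x`, `x : G`) represents the pairwise
disjoint relations `R 0, …, R (k-1)`: for all distinct `x y : G` and all `i`,
the label of `lca (ι x) (ι y)` equals `i` iff `(x,y) ∈ R i`. -/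
def RepresentsRel {G V : Type} (k : ℕ) (R : Fin k → G → G → Prop)
    (T : SimpleGraph V) (root : V) (ι : G → V) (t : V → Fin k) : Prop :=
  ∀ x y : G, x ≠ y → ∀ w : V, IsLCA T root w (ι x) (ι y) →
    ∀ i : Fin k, (t w = i ↔ R i x y)

/-- There exists an event-labeled tree representing the relations `R 0, …, R (k-1)`:
a rooted tree whose leaf set is exactly `G` (via the injection `ι`) together with an
event labeling `t` such that `t (lca x y) = i ↔ (x,y) ∈ R i` for all distinct `x, y`. -/
def HasEventTree (G : Type) (k : ℕ) (R : Fin k → G → G → Prop) : Prop :=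
  ∃ (V : Type) (T : SimpleGraph V) (root : V) (ι : G → V) (t : V → Fin k),
    T.IsTree ∧ Function.Injective ι ∧
    (∀ v : V, IsLeaf T root v ↔ ∃ g : G, ι g = v) ∧
    RepresentsRel k R T root ι t

/-- Condition (ii): for any three pairwise distinct elements, the three pairs among
them lie in at most two distinct relations. -/
def AtMostTwoColors {G : Type} (k : ℕ) (R : Fin k → G → G → Prop) : Prop :=
  ∀ x y z : G, x ≠ y → x ≠ z → y ≠ z →
    ∀ i j l : Fin k, R i x y → R j x z → R l y z → (i = j ∨ i = l ∨ j = l)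

/-- The triple set `𝒯_{R_1,…,R_k}`: `xy|z` belongs to it iff `x,y,z` are pairwise
distinct, `(x,z)` and `(y,z)` lie in the same relation `R i` and `(x,y)` lies in a
different relation `R j`. -/
def TripleSet {G : Type} (k : ℕ) (R : Fin k → G → G → Prop) (x y z : G) : Prop :=
  x ≠ y ∧ x ≠ z ∧ y ≠ z ∧ ∃ i j : Fin k, i ≠ j ∧ R i x z ∧ R i y z ∧ R j x y

/-- A set of rooted triples (over `G`) is consistent if there is a rooted tree
containing all of them (elements of `G` realized as distinct vertices). -/
def Consistent {G : Type} (Tr : G → G → G → Prop) : Prop :=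
  ∃ (V : Type) (T : SimpleGraph V) (root : V) (ι : G → V),
    T.IsTree ∧ Function.Injective ι ∧
    ∀ x y z : G, Tr x y z → ContainsTriple T root (ι x) (ι y) (ι z)

/-!
In a rooted tree the ancestors of a vertex form a chain, so of the three pairwise least common
ancestors of three leaves two coincide. If `a b c d` were an induced path of `G_R` in a tree
representing `R, R'`, this for the triples `abc`, `bcd`, `acd` would give
`lca(a,b) = lca(b,c) = lca(c,d)` and `lca(a,c) = lca(a,d)`; then `lca(a,b)` and `lca(a,c)` are
ancestors of each other, although their labels differ.

Conversely, by Seinsche's theorem every set of at least two vertices of a cograph splits into two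
nonempty parts with either all or no edges between them. Splitting recursively gives a binary
cotree, realised as the tree of its node addresses (binary words ordered by prefix): the least
common ancestor of two leaves is the longest common prefix of their addresses, and it carries the
type of the split that separated them.
-/

section RootedTree

variable {V : Type} {T : SimpleGraph V} {root u v w x y z w₁ w₂ w₃ : V}

lemma anc_iff_mem_support (hT : T.IsTree) {p : T.Walk v root} (hp : p.IsPath) :
    Anc T root u v ↔ u ∈ p.support :=
  ⟨fun h => h p hp, fun h _ hq => (hT.existsUnique_path v root).unique hq hp ▸ h⟩

lemma anc_self : Anc T root v v := fun p _ => p.start_mem_support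

lemma anc_root : Anc T root root v := fun p _ => p.end_mem_support

lemma Anc.trans (hT : T.IsTree) (huv : Anc T root u v) (hvw : Anc T root v w) :
    Anc T root u w := by
  classical
  obtain ⟨p, hp, -⟩ := hT.existsUnique_path w root
  have hv := hvw p hp
  rw [anc_iff_mem_support hT hp]
  exact p.support_dropUntil_subset_support hv (huv _ (hp.dropUntil hv))

lemma Anc.dist_lt (hT : T.IsTree) (huv : Anc T root u v) (hne : u ≠ v) :
    T.dist u root < T.dist v root := by
  classical
  obtain ⟨p, hp, hlen⟩ := hT.connected.exists_path_of_dist v root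
  calc T.dist u root ≤ (p.dropUntil u (huv p hp)).length := SimpleGraph.dist_le _
    _ < p.length := p.length_dropUntil_lt_length _ hne
    _ = T.dist v root := hlen

lemma Anc.antisymm (hT : T.IsTree) (huv : Anc T root u v) (hvu : Anc T root v u) : u = v := by
  by_contra hne
  exact (huv.dist_lt hT hne).asymm (hvu.dist_lt hT (Ne.symm hne))

lemma Anc.total (hT : T.IsTree) (huw : Anc T root u w) (hvw : Anc T root v w) :
    Anc T root u v ∨ Anc T root v u := by
  classical
  obtain ⟨p, hp, -⟩ := hT.existsUnique_path w root
  have hu := huw p hp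
  have hv := hvw p hp
  rw [anc_iff_mem_support hT (hp.dropUntil hv), anc_iff_mem_support hT (hp.dropUntil hu)]
  exact (List.suffix_or_suffix_of_suffix (p.support_dropUntil_suffix_support hu)
    (p.support_dropUntil_suffix_support hv)).imp
    (fun h => h.subset (p.dropUntil u hu).start_mem_support)
    (fun h => h.subset (p.dropUntil v hv).start_mem_support)

lemma IsLCA.symm (h : IsLCA T root w x y) : IsLCA T root w y x :=
  ⟨h.2.1, h.1, fun u hy hx => h.2.2 u hx hy⟩

lemma exists_isLCA (hT : T.IsTree) (x y : V) : ∃ w, IsLCA T root w x y := by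
  classical
  obtain ⟨p, hp, -⟩ := hT.existsUnique_path x root
  obtain ⟨w, hw, hmax⟩ := (p.support.toFinset.filter (Anc T root · y)).exists_max_image
    (T.dist · root) ⟨root, by simp [p.end_mem_support, anc_root]⟩
  simp only [Finset.mem_filter, List.mem_toFinset] at hw hmax
  have hwx : Anc T root w x := (anc_iff_mem_support hT hp).mpr hw.1
  refine ⟨w, hwx, hw.2, fun u hux huy => ?_⟩
  obtain rfl | hne := eq_or_ne u w
  · exact anc_self
  refine (hux.total hT hwx).resolve_right fun hwu => ?_
  exact (hmax u ⟨hux p hp, huy⟩).not_gt (hwu.dist_lt hT hne.symm)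

lemma IsLCA.eq_or_eq_of_anc (hT : T.IsTree) (hxy : IsLCA T root w₁ x y)
    (hxz : IsLCA T root w₂ x z) (hyz : IsLCA T root w₃ y z) (h : Anc T root w₁ w₂) :
    w₁ = w₂ ∨ w₁ = w₃ := by
  have h₁₃ : Anc T root w₁ w₃ := hyz.2.2 w₁ hxy.2.1 (h.trans hT hxz.2.1)
  rcases hxz.2.1.total hT hyz.2.1 with h₂₃ | h₃₂
  · exact .inl (h.antisymm hT (hxy.2.2 w₂ hxz.1 (h₂₃.trans hT hyz.1)))
  · exact .inr (h₁₃.antisymm hT (hxy.2.2 w₃ (h₃₂.trans hT hxz.1) hyz.1))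

lemma IsLCA.eq_or_eq_or_eq (hT : T.IsTree) (hxy : IsLCA T root w₁ x y)
    (hxz : IsLCA T root w₂ x z) (hyz : IsLCA T root w₃ y z) :
    w₁ = w₂ ∨ w₁ = w₃ ∨ w₂ = w₃ := by
  rcases hxy.1.total hT hxz.1 with h | h
  · exact (hxy.eq_or_eq_of_anc hT hxz hyz h).imp_right .inl
  · rcases hxz.eq_or_eq_of_anc hT hxy hyz.symm h with h | h
    · exact .inl h.symm
    · exact .inr (.inr h)

lemma IsLCA.eq_of_ne (hT : T.IsTree) (hxy : IsLCA T root w₁ x y)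
    (hxz : IsLCA T root w₂ x z) (hyz : IsLCA T root w₃ y z) (h₁₂ : w₁ ≠ w₂) (h₂₃ : w₂ ≠ w₃) :
    w₁ = w₃ :=
  ((hxy.eq_or_eq_or_eq hT hxz hyz).resolve_left h₁₂).resolve_right h₂₃

end RootedTree

theorem isCograph_relGraph_of_hasEventTree {G : Type} {k : ℕ} {R : Fin k → G → G → Prop}
    (h : HasEventTree G k R) (i : Fin k) : IsCograph (relGraph (R i)) := by
  obtain ⟨V, T, root, ι, t, hT, -, -, hrep⟩ := h
  have hadj : ∀ {x y : G} {w : V}, x ≠ y → IsLCA T root w (ι x) (ι y) →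
      ((relGraph (R i)).Adj x y ↔ t w = i) := by
    intro x y w hxy hw
    change x ≠ y ∧ (R i x y ∨ R i y x) ↔ _
    rw [← hrep _ _ hxy _ hw, ← hrep _ _ hxy.symm _ hw.symm]
    simp [hxy]
  rintro ⟨a, b, c, d, hab, hac, had, hbc, hbd, hcd, eab, ebc, ecd, nac, nad, nbd⟩
  obtain ⟨wab, hwab⟩ := exists_isLCA hT (root := root) (ι a) (ι b)
  obtain ⟨wac, hwac⟩ := exists_isLCA hT (root := root) (ι a) (ι c)
  obtain ⟨wad, hwad⟩ := exists_isLCA hT (root := root) (ι a) (ι d)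
  obtain ⟨wbc, hwbc⟩ := exists_isLCA hT (root := root) (ι b) (ι c)
  obtain ⟨wbd, hwbd⟩ := exists_isLCA hT (root := root) (ι b) (ι d)
  obtain ⟨wcd, hwcd⟩ := exists_isLCA hT (root := root) (ι c) (ι d)
  rw [hadj hab hwab] at eab
  rw [hadj hbc hwbc] at ebc
  rw [hadj hcd hwcd] at ecd
  rw [hadj hac hwac] at nac
  rw [hadj had hwad] at nad
  rw [hadj hbd hwbd] at nbd
  have e₁ : wab = wbc := hwab.eq_of_ne hT hwac hwbc (by grind) (by grind)
  have e₂ : wbc = wcd := hwbc.eq_of_ne hT hwbd hwcd (by grind) (by grind)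
  have e₃ : wac = wad := hwac.symm.eq_of_ne hT hwcd hwad (by grind) (by grind)
  have h₁ : Anc T root wab wac := hwac.2.2 wab hwab.1 (e₁ ▸ hwbc.2.1)
  have h₂ : Anc T root wac wab := e₁ ▸ e₂ ▸ hwcd.2.2 wac hwac.2.1 (e₃ ▸ hwad.2.1)
  exact nac (h₂.antisymm hT h₁ ▸ eab)

namespace List

variable {α : Type} [DecidableEq α]

def commonPrefix : List α → List α → List α
  | a :: l, b :: l' => if a = b then a :: commonPrefix l l' else []
  | _, _ => []

lemma prefix_commonPrefix_iff {u : List α} :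
    ∀ {l l' : List α}, u <+: commonPrefix l l' ↔ u <+: l ∧ u <+: l' := by
  induction u with
  | nil => simp
  | cons c u ih =>
    rintro (_ | ⟨a, l⟩) (_ | ⟨b, l'⟩) <;> grind [commonPrefix]

end List

section PrefixGraph

variable {α : Type}

def PrefixClosed (S : Set (List α)) : Prop := ∀ ⦃l l'⦄, l' <+: l → l ∈ S → l' ∈ S

def prefixGraph (S : Set (List α)) : SimpleGraph S where
  Adj u v := (∃ a, v.1 = u.1 ++ [a]) ∨ ∃ a, u.1 = v.1 ++ [a]
  symm := ⟨fun _ _ h => h.symm⟩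
  loopless := ⟨fun _ h => by obtain ⟨a, h⟩ | ⟨a, h⟩ := h <;> simpa using congrArg List.length h⟩

variable {S : Set (List α)}

lemma prefixGraph_isAcyclic : (prefixGraph S).IsAcyclic := by
  refine SimpleGraph.isAcyclic_iff_forall_adj_isBridge.mpr fun u v huv => ?_
  wlog h : ∃ a, v.1 = u.1 ++ [a] generalizing u v
  · rw [Sym2.eq_swap]
    exact this v u huv.symm (huv.resolve_left h)
  obtain ⟨a, ha⟩ := h
  refine SimpleGraph.isBridge_iff_forall_walk_mem_edges.mpr fun p => ?_
  -- the only edge leaving the words that extend `v` is the one to `u`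
  obtain ⟨d, hd, hout, hin⟩ := p.exists_boundary_dart {x | ¬ v.1 <+: x.1}
    (fun h => by simpa [ha] using h.length_le) (by simp)
  simp only [Set.mem_ofPred_eq, not_not] at hout hin
  obtain ⟨b, hb⟩ | ⟨b, hb⟩ := d.adj
  · obtain h | h := List.prefix_concat_iff.mp (hb ▸ hin)
    · have hu : u = d.fst := Subtype.ext (List.append_inj_left' (ha.symm.trans h) rfl)
      have hv : v = d.snd := Subtype.ext (h.trans hb.symm)
      have he : s(u, v) = d.edge := by rw [hu, hv]; rfl
      rw [he, SimpleGraph.Walk.edges_eq_map_darts]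
      exact List.mem_map_of_mem hd
    · exact absurd h hout
  · exact absurd (hin.trans (hb ▸ List.prefix_append _ _)) hout

variable (hS : PrefixClosed S) (hnil : [] ∈ S)
include hS hnil

lemma prefixGraph_exists_rootPath (v : S) : ∃ p : (prefixGraph S).Walk v ⟨[], hnil⟩,
    p.IsPath ∧ ∀ u : S, u ∈ p.support ↔ u.1 <+: v.1 := by
  obtain ⟨l, hl⟩ := v
  induction l using List.reverseRecOn with
  | nil => exact ⟨.nil, .nil, fun u => by simp [Subtype.ext_iff]⟩
  | append_singleton l a ih =>
    obtain ⟨p, hp, hsupp⟩ := ih (hS (List.prefix_append l [a]) hl)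
    have hadj : (prefixGraph S).Adj ⟨l ++ [a], hl⟩ ⟨l, hS (List.prefix_append l [a]) hl⟩ :=
      .inr ⟨a, rfl⟩
    refine ⟨.cons hadj p, hp.cons fun h => ?_, fun u => ?_⟩
    · simpa using ((hsupp _).mp h).length_le
    · rw [SimpleGraph.Walk.support_cons, List.mem_cons, hsupp, List.prefix_concat_iff,
        Subtype.ext_iff]

lemma prefixGraph_isTree : (prefixGraph S).IsTree := by
  refine ⟨(SimpleGraph.connected_iff_exists_forall_reachable _).mpr ⟨⟨[], hnil⟩, fun v => ?_⟩,
    prefixGraph_isAcyclic⟩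
  obtain ⟨p, -⟩ := prefixGraph_exists_rootPath hS hnil v
  exact ⟨p.reverse⟩

lemma anc_prefixGraph_iff {u v : S} : Anc (prefixGraph S) ⟨[], hnil⟩ u v ↔ u.1 <+: v.1 := by
  obtain ⟨p, hp, hsupp⟩ := prefixGraph_exists_rootPath hS hnil v
  rw [anc_iff_mem_support (prefixGraph_isTree hS hnil) hp, hsupp]

lemma IsLCA.val_eq_commonPrefix [DecidableEq α] {w x y : S}
    (h : IsLCA (prefixGraph S) ⟨[], hnil⟩ w x y) : w.1 = x.1.commonPrefix y.1 := by
  simp only [IsLCA, anc_prefixGraph_iff hS hnil] at h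
  have hle : w.1 <+: x.1.commonPrefix y.1 := List.prefix_commonPrefix_iff.mpr ⟨h.1, h.2.1⟩
  have hcp := List.prefix_commonPrefix_iff.mp (List.prefix_refl (x.1.commonPrefix y.1))
  have hge := h.2.2 ⟨_, hS hcp.1 x.2⟩ hcp.1 hcp.2
  exact hle.eq_of_length (hle.length_le.antisymm hge.length_le)

lemma isLeaf_prefixGraph_iff {v : S} :
    IsLeaf (prefixGraph S) ⟨[], hnil⟩ v ↔ v.1 ≠ [] ∧ ∀ a, v.1 ++ [a] ∉ S := by
  rw [IsLeaf, ne_eq, Subtype.ext_iff]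
  refine and_congr_right fun hv => ?_
  have hparent : (prefixGraph S).Adj v ⟨v.1.dropLast, hS (List.dropLast_prefix _) v.2⟩ :=
    .inr ⟨_, (List.dropLast_append_getLast hv).symm⟩
  refine ⟨fun ⟨u, _, huniq⟩ a ha => ?_, fun h => ⟨_, hparent, fun u hu => ?_⟩⟩
  · have hchild := huniq ⟨_, ha⟩ (.inl ⟨a, rfl⟩)
    have := congrArg (List.length ∘ Subtype.val) ((huniq _ hparent).trans hchild.symm)
    simp at this
  · obtain ⟨a, ha⟩ | ⟨a, ha⟩ := hu
    · exact absurd (ha ▸ u.2) (h a)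
    · exact Subtype.ext (by simp [ha])

end PrefixGraph

section Seinsche

open Finset

variable {G : Type} {H : SimpleGraph G}

lemma IsCograph.compl (hH : IsCograph H) : IsCograph Hᶜ := by
  rintro ⟨a, b, c, d, hab, hac, had, hbc, hbd, hcd, eab, ebc, ecd, nac, nad, nbd⟩
  simp only [SimpleGraph.compl_adj, not_and, not_not] at *
  exact hH ⟨c, a, d, b, hac.symm, hcd, hbc.symm, had, hab, hbd.symm, (nac hac).symm, nad had,
    (nbd hbd).symm, ecd.2, fun h => ebc.2 h.symm, eab.2⟩

variable [DecidableEq G]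

def IsSplit (H : SimpleGraph G) (s A : Finset G) : Prop :=
  A.Nonempty ∧ A ⊂ s ∧ ∀ x ∈ A, ∀ y ∈ s \ A, ¬ H.Adj x y

variable {s A : Finset G} {v : G}

lemma IsSplit.sdiff (h : IsSplit H s A) : IsSplit H s (s \ A) := by
  obtain ⟨hne, hss, hA⟩ := h
  refine ⟨sdiff_nonempty.mpr hss.not_subset, sdiff_ssubset hss.subset hne, fun x hx y hy hxy => ?_⟩
  rw [sdiff_sdiff_right_self, inf_eq_inter, inter_eq_right.mpr hss.subset] at hy
  exact hA y hy x hx hxy.symm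

/-- Failing the conclusion, `v` has a neighbour in every part of a split of `s.erase v` and a
non-neighbour `w`; inside the part of `w` some edge `xy` has `x ~ v ≁ y`, and a neighbour `b` of
`v` in the other part makes `b v x y` an induced `P₄`. -/
lemma exists_isSplit_of_isSplit_erase (hH : IsCograph H) (hv : v ∈ s) (hs : 2 ≤ #s)
    (hA : IsSplit H (s.erase v) A) : ∃ B, IsSplit H s B ∨ IsSplit Hᶜ s B := by
  classical
  by_contra! hcon
  have hnbr : ∀ C, IsSplit H (s.erase v) C → ∃ c ∈ C, H.Adj v c := by
    intro C ⟨hne, hss, hC⟩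
    by_contra! hno
    refine (hcon C).1 ⟨hne, hss.trans_subset (erase_subset v s), fun x hx y hy => ?_⟩
    obtain rfl | hyv := eq_or_ne y v
    · exact fun h => hno x hx h.symm
    · exact hC x hx y (by simp_all)
  obtain ⟨w, hw, hvw⟩ : ∃ w ∈ s.erase v, ¬ H.Adj v w := by
    by_contra! hall
    refine (hcon {v}).2 ⟨singleton_nonempty v, ?_, fun x hx y hy => ?_⟩
    · exact Finset.ssubset_iff_subset_ne.mpr
        ⟨singleton_subset_iff.mpr hv, by rintro rfl; simp at hs⟩
    · simp_all
  wlog hwA : w ∈ A generalizing A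
  · exact this hA.sdiff (mem_sdiff.mpr ⟨hw, hwA⟩)
  obtain ⟨x, hxA, hvx, y, hyA, hvy, hxy⟩ :
      ∃ x ∈ A, H.Adj v x ∧ ∃ y ∈ A, ¬ H.Adj v y ∧ H.Adj x y := by
    by_contra! hno
    -- otherwise the non-neighbours of `v` in `A` would split off
    have hsplit : IsSplit H (s.erase v) {y ∈ A | ¬ H.Adj v y} := by
      refine ⟨⟨w, mem_filter.mpr ⟨hwA, hvw⟩⟩, (filter_subset _ A).trans_ssubset hA.2.1,
        fun y hy x hx hxy => ?_⟩
      by_cases hxA : x ∈ A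
      · exact hno x hxA (by simp_all) y (mem_filter.mp hy).1 (mem_filter.mp hy).2
          hxy.symm
      · exact hA.2.2 y (mem_filter.mp hy).1 x (by simp_all) hxy
    obtain ⟨c, hc, hvc⟩ := hnbr _ hsplit
    exact (mem_filter.mp hc).2 hvc
  obtain ⟨b, hb, hvb⟩ := hnbr _ hA.sdiff
  have hbA := (mem_sdiff.mp hb).2
  exact hH ⟨b, v, x, y, (mem_erase.mp (mem_sdiff.mp hb).1).1, fun h => hbA (h ▸ hxA),
    fun h => hbA (h ▸ hyA), hvx.ne, (mem_erase.mp (hA.2.1.subset hyA)).1.symm, hxy.ne, hvb.symm,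
    hvx, hxy, fun h => hA.2.2 x hxA b hb h.symm, fun h => hA.2.2 y hyA b hb h.symm, hvy⟩

lemma isSplit_or_isSplit_compl_pair {a b : G} (hab : a ≠ b) :
    IsSplit H {a, b} {a} ∨ IsSplit Hᶜ {a, b} {a} := by
  have hsub : {a} ⊂ ({a, b} : Finset G) :=
    Finset.ssubset_iff_subset_ne.mpr ⟨by simp, by simp [Finset.ext_iff, hab.symm]⟩
  have hrest : ({a, b} : Finset G) \ {a} = {b} := by ext; aesop
  by_cases h : H.Adj a b
  · exact .inr ⟨by simp, hsub, by simp [hrest, hab, h]⟩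
  · exact .inl ⟨by simp, hsub, by simp [hrest, h]⟩

/-- Seinsche's theorem. -/
theorem IsCograph.exists_isSplit (hH : IsCograph H) (s : Finset G) (hs : 2 ≤ #s) :
    ∃ A, IsSplit H s A ∨ IsSplit Hᶜ s A := by
  induction s using Finset.strongInduction with
  | H s ih =>
  obtain ⟨v, hv⟩ : s.Nonempty := card_pos.mp (by omega)
  by_cases h2 : 2 ≤ #(s.erase v)
  · obtain ⟨A, hA | hA⟩ := ih _ (erase_ssubset hv) h2
    · exact exists_isSplit_of_isSplit_erase hH hv hs hA
    · obtain ⟨B, hB⟩ := exists_isSplit_of_isSplit_erase hH.compl hv hs hA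
      exact ⟨B, by rwa [compl_compl, or_comm] at hB⟩
  · obtain ⟨a, b, hab, rfl⟩ : ∃ a b, a ≠ b ∧ s = {a, b} :=
      card_eq_two.mp (by rw [card_erase_of_mem hv] at h2; omega)
    exact ⟨{a}, isSplit_or_isSplit_compl_pair hab⟩

theorem IsCograph.exists_uniform_split (hH : IsCograph H) (hs : 2 ≤ #s) :
    ∃ A, A.Nonempty ∧ A ⊂ s ∧ ∃ P : Prop, ∀ x ∈ A, ∀ y ∈ s \ A, (H.Adj x y ↔ P) := by
  obtain ⟨A, ⟨hne, hss, hA⟩ | ⟨hne, hss, hA⟩⟩ := hH.exists_isSplit s hs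
  · exact ⟨A, hne, hss, False, fun x hx y hy => iff_false_intro (hA x hx y hy)⟩
  · refine ⟨A, hne, hss, True, fun x hx y hy => iff_true_intro ?_⟩
    have hxy : x ≠ y := fun h => (mem_sdiff.mp hy).2 (h ▸ hx)
    simpa [hxy] using hA x hx y hy

end Seinsche

section Cotree

open Finset

variable {G : Type} {H : SimpleGraph G}

/-- A cotree of `H` on `s`, encoded by the set `dom` of addresses of its nodes: binary words, the
children of a node being its one-letter extensions. -/
structure Cotree (H : SimpleGraph G) (s : Finset G) where
  dom : Set (List Bool)
  pos : G → List Bool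
  series : List Bool → Prop
  prefixClosed : PrefixClosed dom
  pos_mem : ∀ g ∈ s, pos g ∈ dom
  injOn_pos : Set.InjOn pos s
  isLeaf_iff : ∀ p ∈ dom, (∀ b, p ++ [b] ∉ dom) ↔ ∃ g ∈ s, pos g = p
  series_iff : ∀ x ∈ s, ∀ y ∈ s, x ≠ y → (series ((pos x).commonPrefix (pos y)) ↔ H.Adj x y)

namespace Cotree

variable {s : Finset G}

def single (a : G) : Cotree H {a} where
  dom := {[]}
  pos _ := []
  series _ := False
  prefixClosed _ _ h hl := by simp_all
  pos_mem _ _ := rfl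
  injOn_pos := by simp
  isLeaf_iff p hp := by simp_all
  series_iff x hx y hy hxy := by simp_all

lemma pos_ne_nil (c : Cotree H s) (hs : 2 ≤ #s) {g : G} (hg : g ∈ s) : c.pos g ≠ [] := by
  intro hnil
  obtain ⟨h, hh, hhg⟩ := exists_mem_ne hs g
  obtain ⟨b, q, hbq⟩ := List.exists_cons_of_ne_nil fun h' =>
    hhg (c.injOn_pos hh hg (h'.trans hnil.symm))
  refine (c.isLeaf_iff [] (hnil ▸ c.pos_mem g hg)).mpr ⟨g, hg, hnil⟩ b ?_
  exact c.prefixClosed (by simp [hbq]) (c.pos_mem h hh)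

variable [DecidableEq G]

def node (side : G → Bool) (P : Prop) (c : ∀ b, Cotree H {g ∈ s | side g = b})
    (hne : ∀ b, ∃ g ∈ s, side g = b)
    (hP : ∀ x ∈ s, ∀ y ∈ s, side x ≠ side y → (H.Adj x y ↔ P)) : Cotree H s where
  dom := {p | match p with | [] => True | b :: q => q ∈ (c b).dom}
  pos g := side g :: (c (side g)).pos g
  series := fun | [] => P | b :: q => (c b).series q
  prefixClosed := by
    rintro l (_ | ⟨b, q⟩) h hl
    · trivial
    · obtain ⟨r, rfl⟩ := h
      exact (c b).prefixClosed (List.prefix_append q r) hl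
  pos_mem g hg := (c (side g)).pos_mem g (mem_filter.mpr ⟨hg, rfl⟩)
  injOn_pos x hx y hy h := by
    obtain ⟨hs, hp⟩ := List.cons.inj h
    rw [← hs] at hp
    exact (c (side x)).injOn_pos (mem_filter.mpr ⟨hx, rfl⟩) (mem_filter.mpr ⟨hy, hs.symm⟩) hp
  isLeaf_iff := by
    rintro (_ | ⟨b, q⟩) hq
    · simp only [List.nil_append, List.cons_ne_nil, and_false, exists_false, iff_false,
        not_forall, not_not]
      obtain ⟨g, hg, hgb⟩ := hne true
      exact ⟨true, (c true).prefixClosed List.nil_prefix ((c true).pos_mem g (by simp [hg, hgb]))⟩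
    · refine ((c b).isLeaf_iff q hq).trans ⟨?_, ?_⟩
      · rintro ⟨g, hg, rfl⟩
        obtain ⟨hgs, rfl⟩ := mem_filter.mp hg
        exact ⟨g, hgs, rfl⟩
      · rintro ⟨g, hg, h⟩
        obtain ⟨rfl, rfl⟩ := List.cons.inj h
        exact ⟨g, mem_filter.mpr ⟨hg, rfl⟩, rfl⟩
  series_iff x hx y hy hxy := by
    by_cases hs : side x = side y
    · rw [← hs]
      simp only [List.commonPrefix, if_pos]
      exact (c (side x)).series_iff x (by simp [hx]) y (by simp [hy, hs]) hxy
    · simp only [List.commonPrefix, if_neg hs]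
      exact (hP x hx y hy hs).symm

end Cotree

theorem IsCograph.nonempty_cotree [DecidableEq G] (hH : IsCograph H) (s : Finset G)
    (hs : s.Nonempty) : Nonempty (Cotree H s) := by
  induction s using Finset.strongInduction with
  | H s ih =>
  obtain ⟨a, ha⟩ := hs
  obtain rfl | h2 := eq_or_ne s {a}
  · exact ⟨.single a⟩
  obtain ⟨A, hAne, hAs, P, hP⟩ := hH.exists_uniform_split (one_lt_card_iff_nontrivial.mpr
    ((nontrivial_iff_ne_singleton ha).mpr h2))
  have hne : ∀ b, ∃ g ∈ s, decide (g ∈ A) = b := by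
    rintro (_ | _)
    · obtain ⟨g, hg⟩ := sdiff_nonempty.mpr hAs.not_subset
      exact ⟨g, (mem_sdiff.mp hg).1, by simpa using (mem_sdiff.mp hg).2⟩
    · obtain ⟨g, hg⟩ := hAne
      exact ⟨g, hAs.subset hg, by simpa using hg⟩
  have hpart : ∀ b, {g ∈ s | decide (g ∈ A) = b} ⊂ s := fun b => by
    obtain ⟨g, hg, hgb⟩ := hne !b
    exact filter_ssubset.mpr ⟨g, hg, by simp [hgb]⟩
  refine ⟨.node (fun g => decide (g ∈ A)) P
    (fun b => (ih _ (hpart b) (by simpa [Finset.Nonempty] using hne b)).some) hne ?_⟩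
  intro x hx y hy hxy
  by_cases hxA : x ∈ A
  · exact hP x hxA y (mem_sdiff.mpr ⟨hy, by simpa [hxA] using hxy⟩)
  · rw [H.adj_comm]
    exact hP y (by simpa [hxA] using hxy) x (mem_sdiff.mpr ⟨hx, hxA⟩)

theorem Cotree.hasEventTree [Fintype G] (c : Cotree H univ) (hG : 2 ≤ Fintype.card G) :
    HasEventTree G 2 ![H.Adj, fun x y => x ≠ y ∧ ¬ H.Adj x y] := by
  classical
  obtain ⟨g₀⟩ : Nonempty G := Fintype.card_pos_iff.mp (by omega)
  have hnil : [] ∈ c.dom := c.prefixClosed List.nil_prefix (c.pos_mem g₀ (mem_univ _))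
  refine ⟨c.dom, prefixGraph c.dom, ⟨[], hnil⟩, fun g => ⟨c.pos g, c.pos_mem g (mem_univ g)⟩,
    fun v => if c.series v.1 then 0 else 1, prefixGraph_isTree c.prefixClosed hnil,
    fun x y h => c.injOn_pos (mem_univ x) (mem_univ y) (congrArg Subtype.val h),
    fun v => ?_, fun x y hxy w hw i => ?_⟩
  · rw [isLeaf_prefixGraph_iff c.prefixClosed hnil]
    constructor
    · rintro ⟨-, h⟩
      obtain ⟨g, -, hg⟩ := (c.isLeaf_iff v.1 v.2).mp h
      exact ⟨g, Subtype.ext hg⟩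
    · rintro ⟨g, rfl⟩
      exact ⟨c.pos_ne_nil (by simpa) (mem_univ g), (c.isLeaf_iff _ (c.pos_mem g (mem_univ g))).mpr
        ⟨g, mem_univ g, rfl⟩⟩
  · dsimp only
    rw [hw.val_eq_commonPrefix c.prefixClosed hnil]
    have := c.series_iff x (mem_univ x) y (mem_univ y) hxy
    fin_cases i <;> simp [this, hxy]

end Cotree

theorem HasEventTree.congr {G : Type} {k : ℕ} {R R' : Fin k → G → G → Prop}
    (h : ∀ i x y, x ≠ y → (R i x y ↔ R' i x y)) (hR : HasEventTree G k R) :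
    HasEventTree G k R' := by
  obtain ⟨V, T, root, ι, t, hT, hι, hleaf, hrep⟩ := hR
  exact ⟨V, T, root, ι, t, hT, hι, hleaf, fun x y hxy w hw i => (hrep x y hxy w hw i).trans
    (h i x y hxy)⟩

theorem stmt4_general (G : Type) [Fintype G] (hG : 3 ≤ Fintype.card G)
    (R : G → G → Prop)
    (hsym : ∀ x y, R x y → R y x) :
    HasEventTree G 2 ![R, fun x y => x ≠ y ∧ ¬ R x y] ↔ IsCograph (relGraph R) := by
  classical
  refine ⟨fun h => isCograph_relGraph_of_hasEventTree h 0, fun h => ?_⟩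
  obtain ⟨c⟩ := h.nonempty_cotree Finset.univ (Finset.univ_nonempty_iff.mpr
    (Fintype.card_pos_iff.mp (by omega)))
  refine (c.hasEventTree (by omega)).congr fun i x y hxy => ?_
  have hadj : (relGraph R).Adj x y ↔ R x y :=
    ⟨fun h => h.2.elim id (hsym y x), fun h => ⟨hxy, .inl h⟩⟩
  fin_cases i <;> simp [hadj]

/-- For an irreflexive symmetric relation `R` on `G` (`|G| ≥ 3`) and
its complementary relation `R'` (all pairs of distinct elements not in `R`), there is
an event-labeled tree representing `R, R'` iff the graph `G_R` is a cograph. -/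
theorem stmt4 (G : Type) [Fintype G] (hG : 3 ≤ Fintype.card G)
    (R : G → G → Prop)
    (hirr : ∀ x, ¬ R x x)
    (hsym : ∀ x y, R x y → R y x) :
    HasEventTree G 2 ![R, fun x y => x ≠ y ∧ ¬ R x y] ↔ IsCograph (relGraph R) :=
  stmt4_general G hG R hsym
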